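/- Let (A,▷,◁,α) be a regular finite-dimensional Hom-L-dendriform algebra (α bijective) and let (A,·,α) be its associated vertical Hom-pre-Lie algebra, x·y = x▷y − y◁x. Let r ∈ (A⊕A*)⊗(A⊕A*) be the element Σᵢ vᵢ⊗vᵢ* + vᵢ*⊗vᵢ, where {vᵢ} is a basis of A and {vᵢ*} its dual basis (equivalently r = I + σ(I), where I ∈ A⊗A* corresponds to the identity map of A). Then r is a Hom-s-matrix in the semidirect product Hom-pre-Lie algebra A⋉_{(L_▷^⋆+L_◁^⋆, L_◁^⋆)}A*: the Hom-pre-Lie algebra on A⊕A* with product (x+ξ)(y+η) = x·y + (L_▷^⋆+L_◁^⋆)(x)η + L_◁^⋆(y)ξ and structure map α⊕(α^{-1})*, where ⟨L_▷^⋆(x)ξ, y⟩ = −⟨(α^{-2})*(ξ), α(x)▷y⟩ and ⟨L_◁^⋆(x)ξ, y⟩ = −⟨(α^{-2})*(ξ), α(x)◁y⟩. -/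

import Mathlib

open TensorProduct LinearMap Module

/-- Port helper: the usual additive group of iterated linear maps (definitionally
`LinearMap.addCommGroup`); current instance search no longer finds it for nested spaces. -/
instance addCommGroupIterLinearMap {R M N P : Type*} [CommRing R] [AddCommGroup M] [Module R M]
    [AddCommGroup N] [Module R N] [AddCommGroup P] [Module R P] :
    AddCommGroup (M →ₗ[R] N →ₗ[R] P) :=
  LinearMap.addCommGroup

section Defs

variable {K : Type*} [Field K]

section Basic
variable {A : Type*} [AddCommGroup A] [Module K A]
variable {B : Type*} [AddCommGroup B] [Module K B]
variable {V : Type*} [AddCommGroup V] [Module K V]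

/-- A Hom-pre-Lie algebra structure. -/
def IsHomPreLie (m : A →ₗ[K] A →ₗ[K] A) (α : A →ₗ[K] A) : Prop :=
  (∀ x y, α (m x y) = m (α x) (α y)) ∧
  ∀ x y z, m (m x y) (α z) - m (α x) (m y z) = m (m y x) (α z) - m (α y) (m x z)

/-- A Hom-Lie algebra structure. -/
def IsHomLie (br : A →ₗ[K] A →ₗ[K] A) (φ : A →ₗ[K] A) : Prop :=
  (∀ x y, br x y = - br y x) ∧
  (∀ x y, φ (br x y) = br (φ x) (φ y)) ∧
  ∀ x y z, br (φ x) (br y z) + br (φ y) (br z x) + br (φ z) (br x y) = 0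

/-- A representation of a Hom-Lie algebra on `V` with respect to `β`. -/
def IsHomLieRep (br : A →ₗ[K] A →ₗ[K] A) (φ : A →ₗ[K] A)
    (β : Module.End K V) (ρ : A →ₗ[K] Module.End K V) : Prop :=
  (∀ x, ρ (φ x) * β = β * ρ x) ∧
  ∀ x y, ρ (br x y) * β = ρ (φ x) * ρ y - ρ (φ y) * ρ x

/-- A representation of a Hom-pre-Lie algebra on `V` with respect to `β`. -/
def IsHomPreLieRep (m : A →ₗ[K] A →ₗ[K] A) (α : A →ₗ[K] A)
    (β : Module.End K V) (ρ μ : A →ₗ[K] Module.End K V) : Prop :=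
  IsHomLieRep (m - m.flip) α β ρ ∧
  (∀ x, β * μ x = μ (α x) * β) ∧
  ∀ x y, μ (α y) * μ x - μ (m x y) * β = μ (α y) * ρ x - ρ (α x) * μ y

/-- A 1-cocycle of a Hom-Lie algebra with respect to a representation. -/
def IsHomLieCocycle (br : A →ₗ[K] A →ₗ[K] A) (φ : A →ₗ[K] A)
    (ρ : A →ₗ[K] Module.End K V) (δ : A →ₗ[K] V) : Prop :=
  ∀ x y, δ (br x y) = ρ (φ x) (δ y) - ρ (φ y) (δ x)

/-- A matched pair of Hom-Lie algebras. -/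
def IsHomLieMatchedPair (brA : A →ₗ[K] A →ₗ[K] A) (φA : A →ₗ[K] A)
    (brB : B →ₗ[K] B →ₗ[K] B) (φB : B →ₗ[K] B)
    (ρ : A →ₗ[K] Module.End K B) (ρ' : B →ₗ[K] Module.End K A) : Prop :=
  IsHomLie brA φA ∧ IsHomLie brB φB ∧
  IsHomLieRep brA φA φB ρ ∧ IsHomLieRep brB φB φA ρ' ∧
  (∀ x y x', ρ' (φB x') (brA x y) =
    brA (ρ' x' x) (φA y) + brA (φA x) (ρ' x' y) + ρ' (ρ y x') (φA x) - ρ' (ρ x x') (φA y)) ∧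
  ∀ x x' y', ρ (φA x) (brB x' y') =
    brB (ρ x x') (φB y') + brB (φB x') (ρ x y') + ρ (ρ' y' x) (φB x') - ρ (ρ' x' x) (φB y')

/-- A matched pair of Hom-pre-Lie algebras. -/
def IsHomPreLieMatchedPair (mA : A →ₗ[K] A →ₗ[K] A) (αA : A →ₗ[K] A)
    (mB : B →ₗ[K] B →ₗ[K] B) (αB : B →ₗ[K] B)
    (lA rA : A →ₗ[K] Module.End K B) (lB rB : B →ₗ[K] Module.End K A) : Prop :=
  IsHomPreLie mA αA ∧ IsHomPreLie mB αB ∧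
  IsHomPreLieRep mA αA αB lA rA ∧ IsHomPreLieRep mB αB αA lB rB ∧
  (∀ (x : A) (a b : B), rA (αA x) (mB a b - mB b a) =
    rA (lB b x) (αB a) - rA (lB a x) (αB b) + mB (αB a) (rA x b) - mB (αB b) (rA x a)) ∧
  (∀ (x : A) (a b : B), lA (αA x) (mB a b) =
    -(lA (lB a x - rB a x) (αB b)) + mB (lA x a - rA x a) (αB b)
      + rA (rB b x) (αB a) + mB (αB a) (lA x b)) ∧
  (∀ (a : B) (x y : A), rB (αB a) (mA x y - mA y x) =
    rB (lA y a) (αA x) - rB (lA x a) (αA y) + mA (αA x) (rB a y) - mA (αA y) (rB a x)) ∧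
  ∀ (a : B) (x y : A), lB (αB a) (mA x y) =
    -(lB (lA x a - rA x a) (αA y)) + mA (lB a x - rB a x) (αA y)
      + rB (rA y a) (αA x) + mA (αA x) (lB a y)

/-- A Hom-L-dendriform algebra structure. -/
def IsHomLDendriform (tr tl : A →ₗ[K] A →ₗ[K] A) (α : A →ₗ[K] A) : Prop :=
  (∀ x y, α (tr x y) = tr (α x) (α y)) ∧
  (∀ x y, α (tl x y) = tl (α x) (α y)) ∧
  (∀ x y z, tr (tr x y) (α z) + tr (tl x y) (α z) + tr (α y) (tr x z)
      - tr (tl y x) (α z) - tr (tr y x) (α z) - tr (α x) (tr y z) = 0) ∧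
  ∀ x y z, tl (tr x y) (α z) + tl (α y) (tr x z) + tl (α y) (tl x z)
      - tl (tl y x) (α z) - tr (α x) (tl y z) = 0

/-- A Hom-O-operator on a Hom-pre-Lie algebra with respect to a representation. -/
def IsHomOOperator (m : A →ₗ[K] A →ₗ[K] A) (α : A →ₗ[K] A)
    (β : V ≃ₗ[K] V) (ρ μ : A →ₗ[K] Module.End K V) (T : V →ₗ[K] A) : Prop :=
  (∀ v, T (β v) = α (T v)) ∧
  ∀ u v, m (T u) (T v) = T (ρ (T (β.symm u)) v + μ (T (β.symm v)) u)

/-- A quadratic Hom-pre-Lie algebra. -/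
def IsQuadraticHomPreLie (m : A →ₗ[K] A →ₗ[K] A) (α : A →ₗ[K] A)
    (ω : A →ₗ[K] A →ₗ[K] K) : Prop :=
  IsHomPreLie m α ∧
  (∀ x y, ω x y = - ω y x) ∧
  (∀ x, (∀ y, ω x y = 0) → x = 0) ∧
  (∀ x y, ω (α x) (α y) = ω x y) ∧
  ∀ x y z, ω (m x y) (α z) = - ω (α y) (m x z - m z x)

/-- A Manin triple for Hom-pre-Lie algebras. -/
def IsManinTriple (m : A →ₗ[K] A →ₗ[K] A) (α : A →ₗ[K] A)
    (ω : A →ₗ[K] A →ₗ[K] K) (A1 A2 : Submodule K A) : Prop :=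
  IsQuadraticHomPreLie m α ω ∧
  (∀ x ∈ A1, ∀ y ∈ A1, m x y ∈ A1) ∧ (∀ x ∈ A1, α x ∈ A1) ∧
  (∀ x ∈ A2, ∀ y ∈ A2, m x y ∈ A2) ∧ (∀ x ∈ A2, α x ∈ A2) ∧
  (∀ x ∈ A1, ∀ y ∈ A1, ω x y = 0) ∧ (∀ x ∈ A2, ∀ y ∈ A2, ω x y = 0) ∧
  IsCompl A1 A2

/-- A Hessian structure on a Hom-pre-Lie algebra. -/
def IsHessian (m : A →ₗ[K] A →ₗ[K] A) (α : A →ₗ[K] A) (Bf : A →ₗ[K] A →ₗ[K] K) : Prop :=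
  (∀ x y, Bf x y = Bf y x) ∧ (∀ x, (∀ y, Bf x y = 0) → x = 0) ∧
  (∀ x y, Bf (α x) (α y) = Bf x y) ∧
  ∀ x y z, Bf (m x y) (α z) - Bf (α x) (m y z) = Bf (m y x) (α z) - Bf (α y) (m x z)

end Basic

section Transpose
variable {X Y : Type*} [AddCommGroup X] [Module K X] [AddCommGroup Y] [Module K Y]

/-- The transpose of linear maps, as a bundled linear map. -/
noncomputable def transposeH : (X →ₗ[K] Y) →ₗ[K] (Y →ₗ[K] K) →ₗ[K] (X →ₗ[K] K) :=
  (LinearMap.llcomp K X Y K).flip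

@[simp] theorem transposeH_apply (f : X →ₗ[K] Y) (ξ : Y →ₗ[K] K) (x : X) :
    transposeH f ξ x = ξ (f x) := rfl

end Transpose

section StarOps
variable {A : Type*} [AddCommGroup A] [Module K A]

/-- The evaluation map into the double dual. -/
noncomputable def evalH : A →ₗ[K] ((A →ₗ[K] K) →ₗ[K] K) :=
  (LinearMap.id : (A →ₗ[K] K) →ₗ[K] (A →ₗ[K] K)).flip

/-- The operator `L^⋆` : `⟨L^⋆_x ξ, y⟩ = -⟨ξ, α⁻¹(x) · α⁻²(y)⟩`. -/
noncomputable def Lstar (m : A →ₗ[K] A →ₗ[K] A) (α : A ≃ₗ[K] A) :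
    A →ₗ[K] (A →ₗ[K] K) →ₗ[K] (A →ₗ[K] K) :=
  -(transposeH ∘ₗ
      (LinearMap.lcomp K A ((α ^ (-2 : ℤ) : A ≃ₗ[K] A) : A →ₗ[K] A)) ∘ₗ m ∘ₗ
      ((α⁻¹ : A ≃ₗ[K] A) : A →ₗ[K] A))

/-- The operator `R^⋆` : `⟨R^⋆_x ξ, y⟩ = -⟨ξ, α⁻²(y) · α⁻¹(x)⟩`. -/
noncomputable def Rstar (m : A →ₗ[K] A →ₗ[K] A) (α : A ≃ₗ[K] A) :
    A →ₗ[K] (A →ₗ[K] K) →ₗ[K] (A →ₗ[K] K) :=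
  -(transposeH ∘ₗ
      (LinearMap.lcomp K A ((α ^ (-2 : ℤ) : A ≃ₗ[K] A) : A →ₗ[K] A)) ∘ₗ m.flip ∘ₗ
      ((α⁻¹ : A ≃ₗ[K] A) : A →ₗ[K] A))

/-- The operator `ad^⋆ = L^⋆ - R^⋆`. -/
noncomputable def adStar (m : A →ₗ[K] A →ₗ[K] A) (α : A ≃ₗ[K] A) :
    A →ₗ[K] (A →ₗ[K] K) →ₗ[K] (A →ₗ[K] K) :=
  Lstar m α - Rstar m α

variable [FiniteDimensional K A]

/-- The inverse of the double-dual evaluation isomorphism. -/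
noncomputable def evalInvH : ((A →ₗ[K] K) →ₗ[K] K) →ₗ[K] A :=
  (Module.evalEquiv K A).symm.toLinearMap

/-- The operator `ℒ^⋆` : `⟨η, ℒ^⋆_ξ x⟩ = -⟨(α⁻¹)*(ξ) ∘ η, α²(x)⟩`. -/
noncomputable def Lcurly
    (mc : (A →ₗ[K] K) →ₗ[K] (A →ₗ[K] K) →ₗ[K] (A →ₗ[K] K))
    (α : A ≃ₗ[K] A) : (A →ₗ[K] K) →ₗ[K] A →ₗ[K] A :=
  -((LinearMap.llcomp K A ((A →ₗ[K] K) →ₗ[K] K) A evalInvH) ∘ₗ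
      (LinearMap.lcomp K ((A →ₗ[K] K) →ₗ[K] K)
        (evalH ∘ₗ ((α ^ (2 : ℤ) : A ≃ₗ[K] A) : A →ₗ[K] A))) ∘ₗ
      transposeH ∘ₗ mc ∘ₗ
      (transposeH ((α⁻¹ : A ≃ₗ[K] A) : A →ₗ[K] A)))

/-- The operator `ℛ^⋆` : `⟨η, ℛ^⋆_ξ x⟩ = -⟨η ∘ (α⁻¹)*(ξ), α²(x)⟩`. -/
noncomputable def Rcurly
    (mc : (A →ₗ[K] K) →ₗ[K] (A →ₗ[K] K) →ₗ[K] (A →ₗ[K] K))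
    (α : A ≃ₗ[K] A) : (A →ₗ[K] K) →ₗ[K] A →ₗ[K] A :=
  -((LinearMap.llcomp K A ((A →ₗ[K] K) →ₗ[K] K) A evalInvH) ∘ₗ
      (LinearMap.lcomp K ((A →ₗ[K] K) →ₗ[K] K)
        (evalH ∘ₗ ((α ^ (2 : ℤ) : A ≃ₗ[K] A) : A →ₗ[K] A))) ∘ₗ
      transposeH ∘ₗ mc.flip ∘ₗ
      (transposeH ((α⁻¹ : A ≃ₗ[K] A) : A →ₗ[K] A)))

/-- The operator `𝔞𝔡^⋆ = ℒ^⋆ - ℛ^⋆`. -/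
noncomputable def adCurly
    (mc : (A →ₗ[K] K) →ₗ[K] (A →ₗ[K] K) →ₗ[K] (A →ₗ[K] K))
    (α : A ≃ₗ[K] A) : (A →ₗ[K] K) →ₗ[K] A →ₗ[K] A :=
  Lcurly mc α - Rcurly mc α

end StarOps

section Tensor
variable {A : Type*} [AddCommGroup A] [Module K A]

/-- The pairing of `ξ ⊗ η` with elements of `A ⊗ A`. -/
noncomputable def tpair (ξ η : A →ₗ[K] K) : (A ⊗[K] A) →ₗ[K] K :=
  (TensorProduct.lid K K).toLinearMap ∘ₗ TensorProduct.map ξ η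

/-- The pairing of `x ⊗ y` with elements of `A* ⊗ A*`. -/
noncomputable def dpair (x y : A) : ((A →ₗ[K] K) ⊗[K] (A →ₗ[K] K)) →ₗ[K] K :=
  (TensorProduct.lid K K).toLinearMap ∘ₗ TensorProduct.map (evalH x) (evalH y)

/-- Pairing the first two tensor components of `A ⊗ A ⊗ A` with `ξ` and `η`. -/
noncomputable def pair12 (ξ η : A →ₗ[K] K) : (A ⊗[K] (A ⊗[K] A)) →ₗ[K] A :=
  (TensorProduct.lid K A).toLinearMap ∘ₗ
    TensorProduct.map ξ ((TensorProduct.lid K A).toLinearMap ∘ₗ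
      TensorProduct.map η LinearMap.id)

/-- The map `r^♯ : A* → A` associated to `r ∈ A ⊗ A`, `⟨r^♯(ξ), η⟩ = ⟨r, ξ ⊗ η⟩`. -/
noncomputable def rSharpL (r : A ⊗[K] A) : (A →ₗ[K] K) →ₗ[K] A :=
  ((LinearMap.llcomp K (A ⊗[K] A) (K ⊗[K] A) A (TensorProduct.lid K A).toLinearMap) ∘ₗ
    (LinearMap.rTensorHom A)).flip r

/-- The bilinear operation producing `[[r,r]]` out of `r ⊗ r`. -/
noncomputable def homPreLieBB (m : A →ₗ[K] A →ₗ[K] A) (α : A →ₗ[K] A) :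
    ((A ⊗[K] A) ⊗[K] (A ⊗[K] A)) →ₗ[K] (A ⊗[K] (A ⊗[K] A)) :=
  (TensorProduct.assoc K A A A).toLinearMap ∘ₗ
      (TensorProduct.map (TensorProduct.map α α) (TensorProduct.lift m)) ∘ₗ
      (TensorProduct.tensorTensorTensorComm K A A A A).toLinearMap
    - (TensorProduct.map α (TensorProduct.map (TensorProduct.lift (m.flip - m)) α)) ∘ₗ
      (LinearMap.lTensor A ((TensorProduct.assoc K A A A).symm.toLinearMap)) ∘ₗ
      (TensorProduct.assoc K A A (A ⊗[K] A)).toLinearMap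
    - (TensorProduct.map (TensorProduct.lift m)
        ((TensorProduct.map α α) ∘ₗ (TensorProduct.comm K A A).toLinearMap)) ∘ₗ
      (TensorProduct.tensorTensorTensorComm K A A A A).toLinearMap

/-- The element `[[r,r]] ∈ A ⊗ A ⊗ A`. -/
noncomputable def bracket2 (m : A →ₗ[K] A →ₗ[K] A) (α : A →ₗ[K] A) (r : A ⊗[K] A) :
    A ⊗[K] (A ⊗[K] A) :=
  homPreLieBB m α (r ⊗ₜ[K] r)

/-- A Hom-s-matrix in a Hom-pre-Lie algebra. -/
def IsHomSMatrix {B : Type*} [AddCommGroup B] [Module K B]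
    (mB : B →ₗ[K] B →ₗ[K] B) (γ : B ≃ₗ[K] B) (r : B ⊗[K] B) : Prop :=
  (TensorProduct.comm K B B) r = r ∧
  (∀ ξ, rSharpL r (ξ ∘ₗ ((γ⁻¹ : B ≃ₗ[K] B) : B →ₗ[K] B)) = γ (rSharpL r ξ)) ∧
  bracket2 mB (γ : B →ₗ[K] B) r = 0

/-- The representation `x ↦ F(x) ⊗ c + c ⊗ G(x)` on `Y ⊗ Y`. -/
noncomputable def tensorRep {Y : Type*} [AddCommGroup Y] [Module K Y]
    (F G : A →ₗ[K] Y →ₗ[K] Y) (c : Y →ₗ[K] Y) :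
    A →ₗ[K] Module.End K (Y ⊗[K] Y) :=
  (LinearMap.mulRight K (LinearMap.lTensor Y c)) ∘ₗ (LinearMap.rTensorHom Y) ∘ₗ F
    + (LinearMap.mulLeft K (LinearMap.rTensor Y c)) ∘ₗ (LinearMap.lTensorHom Y) ∘ₗ G

/-- The dual map `ρ^⋆` : `⟨ρ^⋆(x)ξ, u⟩ = -⟨(β⁻²)*(ξ), ρ(α(x))u⟩`. -/
noncomputable def rhoStar {V : Type*} [AddCommGroup V] [Module K V]
    (α : A →ₗ[K] A) (β : V ≃ₗ[K] V) (ρ : A →ₗ[K] Module.End K V) :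
    A →ₗ[K] (V →ₗ[K] K) →ₗ[K] (V →ₗ[K] K) :=
  -(transposeH ∘ₗ
      (LinearMap.mulLeft K (((β ^ (-2 : ℤ) : V ≃ₗ[K] V) : V →ₗ[K] V) : Module.End K V)) ∘ₗ
      ρ ∘ₗ α)

/-- The semidirect product Hom-pre-Lie product on `A × W`. -/
noncomputable def sdProduct {W : Type*} [AddCommGroup W] [Module K W]
    (m : A →ₗ[K] A →ₗ[K] A) (l r : A →ₗ[K] W →ₗ[K] W) :
    (A × W) →ₗ[K] (A × W) →ₗ[K] (A × W) :=
  (m.compl₁₂ (LinearMap.fst K A W) (LinearMap.fst K A W)).compr₂ (LinearMap.inl K A W)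
    + ((l.compl₁₂ (LinearMap.fst K A W) (LinearMap.snd K A W))
        + (r.compl₁₂ (LinearMap.fst K A W) (LinearMap.snd K A W)).flip).compr₂
      (LinearMap.inr K A W)

end Tensor

section Std
variable (K)
variable (A : Type*) [AddCommGroup A] [Module K A]

/-- The standard bilinear form `ω̄(x+ξ, y+η) = ⟨ξ,y⟩ - ⟨η,x⟩` on `A × A*`. -/
noncomputable def stdOmega :
    (A × (A →ₗ[K] K)) →ₗ[K] (A × (A →ₗ[K] K)) →ₗ[K] K :=
  (LinearMap.id : (A →ₗ[K] K) →ₗ[K] (A →ₗ[K] K)).compl₁₂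
      (LinearMap.snd K A (A →ₗ[K] K)) (LinearMap.fst K A (A →ₗ[K] K))
    - ((LinearMap.id : (A →ₗ[K] K) →ₗ[K] (A →ₗ[K] K)).compl₁₂
      (LinearMap.snd K A (A →ₗ[K] K)) (LinearMap.fst K A (A →ₗ[K] K))).flip

variable {K A}

/-- The standard product `⋄` on `A × A*`:
`(x+ξ) ⋄ (y+η) = x·y + 𝔞𝔡^⋆_ξ y - ℛ^⋆_η x + ξ∘η + ad^⋆_x η - R^⋆_y ξ`. -/
noncomputable def stdDiamond [FiniteDimensional K A]
    (m : A →ₗ[K] A →ₗ[K] A) (α : A ≃ₗ[K] A)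
    (mc : (A →ₗ[K] K) →ₗ[K] (A →ₗ[K] K) →ₗ[K] (A →ₗ[K] K)) :
    (A × (A →ₗ[K] K)) →ₗ[K] (A × (A →ₗ[K] K)) →ₗ[K] (A × (A →ₗ[K] K)) :=
  (m.compl₁₂ (LinearMap.fst K A (A →ₗ[K] K)) (LinearMap.fst K A (A →ₗ[K] K))
      + (adCurly mc α).compl₁₂ (LinearMap.snd K A (A →ₗ[K] K)) (LinearMap.fst K A (A →ₗ[K] K))
      - ((Rcurly mc α).compl₁₂ (LinearMap.snd K A (A →ₗ[K] K))
          (LinearMap.fst K A (A →ₗ[K] K))).flip).compr₂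
      (LinearMap.inl K A (A →ₗ[K] K))
    + (mc.compl₁₂ (LinearMap.snd K A (A →ₗ[K] K)) (LinearMap.snd K A (A →ₗ[K] K))
      + (adStar m α).compl₁₂ (LinearMap.fst K A (A →ₗ[K] K)) (LinearMap.snd K A (A →ₗ[K] K))
      - ((Rstar m α).compl₁₂ (LinearMap.fst K A (A →ₗ[K] K))
          (LinearMap.snd K A (A →ₗ[K] K))).flip).compr₂
      (LinearMap.inr K A (A →ₗ[K] K))

end Std

section Bialg
variable {A : Type*} [AddCommGroup A] [Module K A]

/-- A Hom-pre-Lie bialgebra: the two 1-cocycle conditions on the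
comultiplications `φ*` and `ψ*`. -/
def IsHomPreLieBialgebra (m : A →ₗ[K] A →ₗ[K] A) (α : A ≃ₗ[K] A)
    (mc : (A →ₗ[K] K) →ₗ[K] (A →ₗ[K] K) →ₗ[K] (A →ₗ[K] K))
    (φs : A →ₗ[K] A ⊗[K] A)
    (ψs : (A →ₗ[K] K) →ₗ[K] (A →ₗ[K] K) ⊗[K] (A →ₗ[K] K)) : Prop :=
  IsHomLieCocycle (m - m.flip) (α : A →ₗ[K] A)
    (tensorRep (m ∘ₗ ((α ^ (-2 : ℤ) : A ≃ₗ[K] A) : A →ₗ[K] A))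
      ((m - m.flip) ∘ₗ ((α ^ (-2 : ℤ) : A ≃ₗ[K] A) : A →ₗ[K] A))
      (α : A →ₗ[K] A)) φs ∧
  IsHomLieCocycle (mc - mc.flip) (transposeH ((α⁻¹ : A ≃ₗ[K] A) : A →ₗ[K] A))
    (tensorRep (mc ∘ₗ transposeH ((α ^ (2 : ℤ) : A ≃ₗ[K] A) : A →ₗ[K] A))
      ((mc - mc.flip) ∘ₗ transposeH ((α ^ (2 : ℤ) : A ≃ₗ[K] A) : A →ₗ[K] A))
      (transposeH ((α⁻¹ : A ≃ₗ[K] A) : A →ₗ[K] A))) ψs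

end Bialg

end Defs

universe u v

/-- The element of `A ⊗ A*` corresponding to a linear map `T : A → A`. -/
noncomputable def tbarOf {K : Type*} [Field K] {A V : Type*}
    [AddCommGroup A] [Module K A] [AddCommGroup V] [Module K V]
    [FiniteDimensional K V] (T : V →ₗ[K] A) : A ⊗[K] (V →ₗ[K] K) :=
  TensorProduct.comm K (Module.Dual K V) A ((dualTensorHomEquiv K V A).symm T)

section Help
variable {K : Type*} [Field K] {A : Type*} [AddCommGroup A] [Module K A]
variable {ι : Type*} [Fintype ι]

theorem hdual (b : Basis ι K A) (f : A →ₗ[K] K) :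
    ∑ i, f (b i) • b.coord i = f := by
  apply LinearMap.ext; intro x
  rw [LinearMap.sum_apply]
  simp only [LinearMap.smul_apply, Basis.coord_apply, smul_eq_mul]
  calc ∑ i, f (b i) * b.repr x i = f (∑ i, b.repr x i • b i) := by
        rw [map_sum]; simp [mul_comm]
    _ = f x := by rw [Basis.sum_repr]

theorem collapse (b : Basis ι K A) (f : A →ₗ[K] K) (D : Module.Dual K A →ₗ[K] K)
    (g : ι → K) (hg : ∀ i, g i = f (b i) * D (b.coord i)) :
    ∑ i, g i = D f := by
  conv_rhs => rw [← hdual b f]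
  rw [map_sum]
  simp only [map_smul, smul_eq_mul]
  exact Finset.sum_congr rfl fun i _ => hg i

theorem fubini [FiniteDimensional K A] (E : A →ₗ[K] A →ₗ[K] K)
    (Y Z : Module.Dual K (Module.Dual K A)) :
    Y (Z ∘ₗ E.flip) = Z (Y ∘ₗ E) := by
  obtain ⟨z₀, rfl⟩ := (Module.evalEquiv K A).surjective Z
  obtain ⟨y₀, rfl⟩ := (Module.evalEquiv K A).surjective Y
  simp [Module.evalEquiv_apply, Module.Dual.eval_apply]

theorem sep_dual [FiniteDimensional K A] (x : A)
    (hx : ∀ ζ : Module.Dual K A, ζ x = 0) : x = 0 := by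
  have := Module.evalEquiv K A
  have h0 : Module.Dual.eval K A x = 0 := by ext ζ; simpa using hx ζ
  have : Module.evalEquiv K A x = 0 := by
    rw [Module.evalEquiv_apply]; exact h0
  simpa using (Module.evalEquiv K A).map_eq_zero_iff.mp this

end Help

set_option linter.unusedSectionVars false
section Help2
variable {K : Type*} [Field K] {A : Type*} [AddCommGroup A] [Module K A]
variable {ι : Type*} [Fintype ι]

theorem rep_eq (b : Basis ι K A) (t : A ⊗[K] (A ⊗[K] A)) :
    t = ∑ i, ∑ j, b i ⊗ₜ[K] (b j ⊗ₜ[K] pair12 (b.coord i) (b.coord j) t) := by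
  induction t using TensorProduct.induction_on with
  | zero => simp
  | add u v hu hv =>
      simp only [map_add, tmul_add, Finset.sum_add_distrib]
      rw [← hu, ← hv]
  | tmul x w =>
      induction w using TensorProduct.induction_on with
      | zero => simp
      | add u v hu hv =>
          simp only [tmul_add, map_add, Finset.sum_add_distrib]
          rw [← hu, ← hv]
      | tmul y z =>
          simp only [pair12, LinearMap.comp_apply, TensorProduct.map_tmul,
            LinearEquiv.coe_coe, TensorProduct.lid_tmul, LinearMap.id_coe, id_eq,
            map_smul, Basis.coord_apply]
          conv_lhs => rw [← b.sum_repr x, ← b.sum_repr y]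
          simp only [TensorProduct.sum_tmul, TensorProduct.tmul_sum]
          rw [Finset.sum_comm]
          refine Finset.sum_congr rfl fun i _ => Finset.sum_congr rfl fun j _ => ?_
          simp [← TensorProduct.smul_tmul', tmul_smul, smul_smul, mul_comm]

theorem sep3 [FiniteDimensional K A] (t : A ⊗[K] (A ⊗[K] A))
    (h : ∀ ξ η : Module.Dual K A, pair12 ξ η t = 0) : t = 0 := by
  rw [rep_eq (Module.finBasis K A) t]
  simp [h]


theorem rSharpL_add {B : Type*} [AddCommGroup B] [Module K B] (r1 r2 : B ⊗[K] B)
    (ξ : Module.Dual K B) : rSharpL (r1 + r2) ξ = rSharpL r1 ξ + rSharpL r2 ξ := by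
  simp [rSharpL]

theorem rSharpL_sum {B : Type*} [AddCommGroup B] [Module K B] (x y : ι → B)
    (ξ : Module.Dual K B) :
    rSharpL (∑ i, x i ⊗ₜ[K] y i) ξ = ∑ i, ξ (x i) • y i := by
  simp [rSharpL, map_sum]

end Help2

section Help3
variable {K : Type*} [Field K] {A : Type*} [AddCommGroup A] [Module K A]
variable {ι : Type*} [Fintype ι]

theorem patA (b : Basis ι K A) (f : A →ₗ[K] K) (W : A →ₗ[K] Module.Dual K A →ₗ[K] K)
    (D : Module.Dual K A →ₗ[K] K) :
    ∑ i, ∑ j, f (b i) * (W (b j) (b.coord i) * D (b.coord j)) = D (W.flip f) := by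
  rw [Finset.sum_comm]
  calc ∑ j, ∑ i, f (b i) * (W (b j) (b.coord i) * D (b.coord j))
      = ∑ j, (W.flip f) (b j) * D (b.coord j) := by
        refine Finset.sum_congr rfl fun j _ => ?_
        rw [collapse b f (D (b.coord j) • W (b j)) _
          (fun i => by simp only [LinearMap.smul_apply, LinearMap.flip_apply, smul_eq_mul]; ring)]
        simp [smul_eq_mul, mul_comm]
    _ = D (W.flip f) := collapse b (W.flip f) D _ (fun j => rfl)

theorem patB (b : Basis ι K A) (U : A →ₗ[K] A →ₗ[K] K)
    (D1 D2 : Module.Dual K A →ₗ[K] K) :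
    ∑ i, ∑ j, U (b i) (b j) * (D1 (b.coord i) * D2 (b.coord j)) = D2 (D1 ∘ₗ U.flip) := by
  rw [Finset.sum_comm]
  calc ∑ j, ∑ i, U (b i) (b j) * (D1 (b.coord i) * D2 (b.coord j))
      = ∑ j, (D1 ∘ₗ U.flip) (b j) * D2 (b.coord j) := by
        refine Finset.sum_congr rfl fun j _ => ?_
        rw [collapse b (U.flip (b j)) (D2 (b.coord j) • D1) _
          (fun i => by simp only [LinearMap.smul_apply, LinearMap.flip_apply, smul_eq_mul]; ring)]
        simp [smul_eq_mul, mul_comm]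
    _ = D2 (D1 ∘ₗ U.flip) := collapse b (D1 ∘ₗ U.flip) D2 _ (fun j => rfl)

theorem patC (b : Basis ι K A) (W : A →ₗ[K] Module.Dual K A →ₗ[K] K)
    (g : A →ₗ[K] K) (D : Module.Dual K A →ₗ[K] K) :
    ∑ i, ∑ j, W (b i) (b.coord j) * (g (b j) * D (b.coord i)) = D (W.flip g) := by
  calc ∑ i, ∑ j, W (b i) (b.coord j) * (g (b j) * D (b.coord i))
      = ∑ i, (W.flip g) (b i) * D (b.coord i) := by
        refine Finset.sum_congr rfl fun i _ => ?_
        rw [collapse b g (D (b.coord i) • W (b i)) _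
          (fun j => by simp only [LinearMap.smul_apply, LinearMap.flip_apply, smul_eq_mul]; ring)]
        simp [smul_eq_mul, mul_comm]
    _ = D (W.flip g) := collapse b (W.flip g) D _ (fun i => rfl)

theorem bb_tmul {B : Type*} [AddCommGroup B] [Module K B]
    (m : B →ₗ[K] B →ₗ[K] B) (g : B →ₗ[K] B) (a b c d : B) :
    homPreLieBB m g ((a ⊗ₜ[K] b) ⊗ₜ[K] (c ⊗ₜ[K] d)) =
      g a ⊗ₜ[K] (g c ⊗ₜ[K] m b d) - g a ⊗ₜ[K] ((m c b - m b c) ⊗ₜ[K] g d)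
        - m a c ⊗ₜ[K] (g d ⊗ₜ[K] g b) := by
  simp [homPreLieBB, tensorTensorTensorComm_tmul, sub_tmul, tmul_sub]

theorem pair12_tmul {B : Type*} [AddCommGroup B] [Module K B]
    (ξ η : Module.Dual K B) (x y z : B) :
    pair12 ξ η (x ⊗ₜ[K] (y ⊗ₜ[K] z)) = (ξ x * η y) • z := by
  simp [pair12, smul_smul, mul_comm]

end Help3


set_option maxHeartbeats 4000000

theorem stmt_19 {K : Type*} [Field K] {A : Type*} [AddCommGroup A] [Module K A]
    [FiniteDimensional K A]
    (tr tl : A →ₗ[K] A →ₗ[K] A) (α : A ≃ₗ[K] A)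
    (h : IsHomLDendriform tr tl (α : A →ₗ[K] A)) :
    IsHomSMatrix
      (sdProduct (tr - tl.flip)
        (rhoStar (α : A →ₗ[K] A) α tr + rhoStar (α : A →ₗ[K] A) α tl)
        (rhoStar (α : A →ₗ[K] A) α tl))
      (α.prodCongr (α.symm.dualMap : (A →ₗ[K] K) ≃ₗ[K] (A →ₗ[K] K)))
      (TensorProduct.map (LinearMap.inl K A (A →ₗ[K] K)) (LinearMap.inr K A (A →ₗ[K] K))
          (tbarOf (LinearMap.id : A →ₗ[K] A))
        + (TensorProduct.comm K (A × (A →ₗ[K] K)) (A × (A →ₗ[K] K)))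
          (TensorProduct.map (LinearMap.inl K A (A →ₗ[K] K)) (LinearMap.inr K A (A →ₗ[K] K))
            (tbarOf (LinearMap.id : A →ₗ[K] A)))) := by
  classical
  set b := Module.finBasis K A with hb
  set γ := α.prodCongr (α.symm.dualMap : (A →ₗ[K] K) ≃ₗ[K] (A →ₗ[K] K)) with hγ
  set P : Fin (Module.finrank K A) → A × (A →ₗ[K] K) :=
    fun i => (b i, 0) with hP
  set Q : Fin (Module.finrank K A) → A × (A →ₗ[K] K) :=
    fun i => ((0 : A), b.coord i) with hQ
  have smul1 : ∀ (c : K) (x : A), ((c • x, (0 : A →ₗ[K] K)) : A × (A →ₗ[K] K))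
      = c • ((x, 0) : A × (A →ₗ[K] K)) := by intro c x; simp
  have smul2 : ∀ (c : K) (u : A →ₗ[K] K), (((0:A), c • u) : A × (A →ₗ[K] K))
      = c • (((0:A), u) : A × (A →ₗ[K] K)) := by intro c u; simp
  have hbar : tbarOf (LinearMap.id : A →ₗ[K] A) = ∑ i, b i ⊗ₜ[K] b.coord i := by
    have h1 : (dualTensorHomEquiv K A A).symm (LinearMap.id) =
        ∑ i, b.coord i ⊗ₜ[K] b i := by
      apply (dualTensorHomEquiv K A A).injective
      rw [LinearEquiv.apply_symm_apply]
      have h2 : (dualTensorHomEquiv K A A) (∑ i, b.coord i ⊗ₜ[K] b i)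
          = dualTensorHom K A A (∑ i, b.coord i ⊗ₜ[K] b i) := rfl
      rw [h2]
      ext x
      simp [dualTensorHom_apply, Basis.coord_apply, Basis.sum_repr]
    rw [tbarOf, h1, map_sum]
    simp
  have hrr : (TensorProduct.map (LinearMap.inl K A (A →ₗ[K] K)) (LinearMap.inr K A (A →ₗ[K] K))
          (tbarOf (LinearMap.id : A →ₗ[K] A))
        + (TensorProduct.comm K (A × (A →ₗ[K] K)) (A × (A →ₗ[K] K)))
          (TensorProduct.map (LinearMap.inl K A (A →ₗ[K] K)) (LinearMap.inr K A (A →ₗ[K] K))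
            (tbarOf (LinearMap.id : A →ₗ[K] A)))) =
      ∑ i, P i ⊗ₜ[K] Q i + ∑ i, Q i ⊗ₜ[K] P i := by
    rw [hbar, map_sum, map_sum]
    simp [hP, hQ]
  rw [hrr]
  have hγinl : ∀ x : A, γ ((x, 0) : A × (A →ₗ[K] K)) = ((α x, 0) : A × (A →ₗ[K] K)) := by
    intro x; simp [hγ, LinearEquiv.prodCongr_apply]
  have hγinr : ∀ u : A →ₗ[K] K, γ (((0:A), u) : A × (A →ₗ[K] K))
      = (((0:A), u ∘ₗ (α.symm : A →ₗ[K] A)) : A × (A →ₗ[K] K)) := by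
    intro u; simp [hγ, LinearEquiv.prodCongr_apply]; rfl
  have hγi : (γ⁻¹ : (A × (A →ₗ[K] K)) ≃ₗ[K] (A × (A →ₗ[K] K))) = γ.symm := rfl
  have hγiinl : ∀ x : A, γ.symm ((x, 0) : A × (A →ₗ[K] K))
      = ((α.symm x, 0) : A × (A →ₗ[K] K)) := by
    intro x
    apply γ.injective
    rw [LinearEquiv.apply_symm_apply, hγinl, LinearEquiv.apply_symm_apply]
  have hγiinr : ∀ u : A →ₗ[K] K, γ.symm (((0:A), u) : A × (A →ₗ[K] K))
      = (((0:A), u ∘ₗ (α : A →ₗ[K] A)) : A × (A →ₗ[K] K)) := by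
    intro u
    apply γ.injective
    rw [LinearEquiv.apply_symm_apply, hγinr]
    ext x <;> simp
  refine ⟨?_, ?_, ?_⟩
  · -- symmetry
    rw [map_add, map_sum, map_sum]
    simp only [TensorProduct.comm_tmul]
    rw [add_comm]

  · -- r-sharp condition
    intro ξ
    rw [hγi]
    set LHS := rSharpL (∑ i, P i ⊗ₜ[K] Q i + ∑ i, Q i ⊗ₜ[K] P i)
      (ξ ∘ₗ (γ.symm : (A × (A →ₗ[K] K)) →ₗ[K] (A × (A →ₗ[K] K)))) with hLHS
    set RHS := γ (rSharpL (∑ i, P i ⊗ₜ[K] Q i + ∑ i, Q i ⊗ₜ[K] P i) ξ) with hRHS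
    have key : ∀ ζ : Module.Dual K (A × (A →ₗ[K] K)), ζ LHS = ζ RHS := by
      intro ζ
      have eLHS : ζ LHS = ∑ i, (ξ (γ.symm (P i))) * ζ (Q i)
          + ∑ i, (ξ (γ.symm (Q i))) * ζ (P i) := by
        rw [hLHS, rSharpL_add, rSharpL_sum, rSharpL_sum, map_add, map_sum, map_sum]
        simp only [map_smul, smul_eq_mul, LinearMap.comp_apply, LinearEquiv.coe_coe]
      have eRHS : ζ RHS = ∑ i, (ξ (P i)) * ζ (γ (Q i))
          + ∑ i, (ξ (Q i)) * ζ (γ (P i)) := by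
        rw [hRHS, rSharpL_add, rSharpL_sum, rSharpL_sum, map_add, map_add, map_sum, map_sum,
          map_sum, map_sum]
        simp only [map_smul, smul_eq_mul, LinearMap.comp_apply, LinearEquiv.coe_coe]
      rw [eLHS, eRHS]
      congr 1
      · rw [collapse b ((ξ ∘ₗ LinearMap.inl K A (A →ₗ[K] K)) ∘ₗ (α.symm : A →ₗ[K] A))
            (ζ ∘ₗ LinearMap.inr K A (A →ₗ[K] K)) _
            (fun i => by simp [hP, hQ, hγiinl, LinearMap.lcomp_apply, LinearMap.comp_apply]),
          collapse b (ξ ∘ₗ LinearMap.inl K A (A →ₗ[K] K))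
            (ζ ∘ₗ LinearMap.inr K A (A →ₗ[K] K) ∘ₗ LinearMap.lcomp K K (α.symm : A →ₗ[K] A)) _
            (fun i => by simp [hP, hQ, hγinr, LinearMap.lcomp_apply, LinearMap.comp_apply]; exact Or.inl rfl)]
        rfl
      · rw [collapse b (ζ ∘ₗ LinearMap.inl K A (A →ₗ[K] K))
            (ξ ∘ₗ LinearMap.inr K A (A →ₗ[K] K) ∘ₗ LinearMap.lcomp K K (α : A →ₗ[K] A)) _
            (fun i => by simp [hP, hQ, hγiinr, LinearMap.lcomp_apply, LinearMap.comp_apply, mul_comm]; exact Or.inl rfl),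
          collapse b ((ζ ∘ₗ LinearMap.inl K A (A →ₗ[K] K)) ∘ₗ (α : A →ₗ[K] A))
            (ξ ∘ₗ LinearMap.inr K A (A →ₗ[K] K)) _
            (fun i => by simp [hP, hQ, hγinl, LinearMap.lcomp_apply, LinearMap.comp_apply, mul_comm])]
        rfl
    have hz : LHS - RHS = 0 := by
      apply sep_dual (K := K)
      intro ζ
      rw [map_sub, key ζ, sub_self]
    have := sub_eq_zero.mp hz
    exact this
  · -- bracket2 = 0
    have hpow : ∀ x : A, ((α ^ (-2 : ℤ) : A ≃ₗ[K] A) : A →ₗ[K] A) x = α.symm (α.symm x) := by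
      intro x
      have hq : (α ^ (-2 : ℤ)) = α⁻¹ * α⁻¹ := by group
      rw [hq]; rfl
    have hrho : ∀ (ρ : A →ₗ[K] A →ₗ[K] A) (x : A) (u : A →ₗ[K] K) (y : A),
        rhoStar (α : A →ₗ[K] A) α ρ x u y = -u (α.symm (α.symm (ρ (α x) y))) := by
      intro ρ x u y
      have h1 : rhoStar (α : A →ₗ[K] A) α ρ x u y
          = -u (((α ^ (-2 : ℤ) : A ≃ₗ[K] A) : A →ₗ[K] A) (ρ ((α : A →ₗ[K] A) x) y)) := by
        rfl
      rw [h1, hpow]; simp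
    have htr' : ∀ x y : A, α.symm (tr x y) = tr (α.symm x) (α.symm y) := by
      intro x y
      apply α.injective
      rw [LinearEquiv.apply_symm_apply]
      have h1 := h.1 (α.symm x) (α.symm y)
      simp only [LinearEquiv.coe_coe] at h1
      rw [h1, LinearEquiv.apply_symm_apply, LinearEquiv.apply_symm_apply]
    have htl' : ∀ x y : A, α.symm (tl x y) = tl (α.symm x) (α.symm y) := by
      intro x y
      apply α.injective
      rw [LinearEquiv.apply_symm_apply]
      have h1 := h.2.1 (α.symm x) (α.symm y)
      simp only [LinearEquiv.coe_coe] at h1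
      rw [h1, LinearEquiv.apply_symm_apply, LinearEquiv.apply_symm_apply]
    have htra : ∀ x y : A, α (tr x y) = tr (α x) (α y) := by
      intro x y
      have h1 := h.1 x y
      simpa using h1
    have htla : ∀ x y : A, α (tl x y) = tl (α x) (α y) := by
      intro x y
      have h1 := h.2.1 x y
      simpa using h1
    have hmB : ∀ (x : A) (u : A →ₗ[K] K) (y : A) (w : A →ₗ[K] K),
        sdProduct (tr - tl.flip) (rhoStar (α : A →ₗ[K] A) α tr + rhoStar (α : A →ₗ[K] A) α tl) (rhoStar (α : A →ₗ[K] A) α tl) (x, u) (y, w)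
        = (tr x y - tl y x, rhoStar (α : A →ₗ[K] A) α tr x w + rhoStar (α : A →ₗ[K] A) α tl x w + rhoStar (α : A →ₗ[K] A) α tl y u) := by
      intro x u y w
      simp [sdProduct]
    have hTT : (∑ i, P i ⊗ₜ[K] Q i + ∑ i, Q i ⊗ₜ[K] P i) ⊗ₜ[K] (∑ i, P i ⊗ₜ[K] Q i + ∑ i, Q i ⊗ₜ[K] P i)
        = ∑ i, ∑ j, ((P i ⊗ₜ[K] Q i) ⊗ₜ[K] (P j ⊗ₜ[K] Q j)
            + (P i ⊗ₜ[K] Q i) ⊗ₜ[K] (Q j ⊗ₜ[K] P j)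
            + (Q i ⊗ₜ[K] P i) ⊗ₜ[K] (P j ⊗ₜ[K] Q j)
            + (Q i ⊗ₜ[K] P i) ⊗ₜ[K] (Q j ⊗ₜ[K] P j)) := by
      simp only [TensorProduct.add_tmul, TensorProduct.tmul_add, TensorProduct.sum_tmul,
        TensorProduct.tmul_sum, Finset.sum_add_distrib]
      rw [Finset.sum_comm (f := fun x a => (P a ⊗ₜ[K] Q a) ⊗ₜ[K] (P x ⊗ₜ[K] Q x)),
        Finset.sum_comm (f := fun x a => (P a ⊗ₜ[K] Q a) ⊗ₜ[K] (Q x ⊗ₜ[K] P x)),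
        Finset.sum_comm (f := fun x a => (Q a ⊗ₜ[K] P a) ⊗ₜ[K] (P x ⊗ₜ[K] Q x)),
        Finset.sum_comm (f := fun x a => (Q a ⊗ₜ[K] P a) ⊗ₜ[K] (Q x ⊗ₜ[K] P x))]
      abel
    have hbrk : bracket2 (sdProduct (tr - tl.flip) (rhoStar (α : A →ₗ[K] A) α tr + rhoStar (α : A →ₗ[K] A) α tl) (rhoStar (α : A →ₗ[K] A) α tl)) (↑γ) (∑ i, P i ⊗ₜ[K] Q i + ∑ i, Q i ⊗ₜ[K] P i) = homPreLieBB (sdProduct (tr - tl.flip) (rhoStar (α : A →ₗ[K] A) α tr + rhoStar (α : A →ₗ[K] A) α tl) (rhoStar (α : A →ₗ[K] A) α tl)) (↑γ) ((∑ i, P i ⊗ₜ[K] Q i + ∑ i, Q i ⊗ₜ[K] P i) ⊗ₜ[K] (∑ i, P i ⊗ₜ[K] Q i + ∑ i, Q i ⊗ₜ[K] P i)) := rfl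
    rw [hbrk, hTT]
    apply sep3 (K := K)
    intro ξ η
    apply sep_dual (K := K)
    intro ζ
    set XA := ξ ∘ₗ LinearMap.inl K A (A →ₗ[K] K) with hXAdef
    set XD := ξ ∘ₗ LinearMap.inr K A (A →ₗ[K] K) with hXDdef
    set YA := η ∘ₗ LinearMap.inl K A (A →ₗ[K] K) with hYAdef
    set YD := η ∘ₗ LinearMap.inr K A (A →ₗ[K] K) with hYDdef
    set ZA := ζ ∘ₗ LinearMap.inl K A (A →ₗ[K] K) with hZAdef
    set ZD := ζ ∘ₗ LinearMap.inr K A (A →ₗ[K] K) with hZDdef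
    have hXa : ∀ x : A, ξ ((x, (0 : A →ₗ[K] K))) = XA x := fun x => rfl
    have hXd : ∀ u : A →ₗ[K] K, ξ (((0 : A), u)) = XD u := fun u => rfl
    have hYa : ∀ x : A, η ((x, (0 : A →ₗ[K] K))) = YA x := fun x => rfl
    have hYd : ∀ u : A →ₗ[K] K, η (((0 : A), u)) = YD u := fun u => rfl
    have hZa : ∀ x : A, ζ ((x, (0 : A →ₗ[K] K))) = ZA x := fun x => rfl
    have hZd : ∀ u : A →ₗ[K] K, ζ (((0 : A), u)) = ZD u := fun u => rfl
    have hlc : ∀ u : A →ₗ[K] K, (LinearMap.lcomp K K (α.symm : A →ₗ[K] A)) u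
        = u ∘ₗ (α.symm : A →ₗ[K] A) := fun u => rfl
    simp only [map_sum, map_add]
    have bridge1 : ∀ i j, ζ (pair12 ξ η (homPreLieBB (sdProduct (tr - tl.flip) (rhoStar (α : A →ₗ[K] A) α tr + rhoStar (α : A →ₗ[K] A) α tl) (rhoStar (α : A →ₗ[K] A) α tl)) (↑γ)
        ((P i ⊗ₜ[K] Q i) ⊗ₜ[K] (P j ⊗ₜ[K] Q j))))
        = ((tl.flip).compr₂ XA) (b i) (b j) * ((ZD ∘ₗ LinearMap.lcomp K K (α.symm : A →ₗ[K] A)) (b.coord i) * (YD ∘ₗ LinearMap.lcomp K K (α.symm : A →ₗ[K] A)) (b.coord j)) - (XA ∘ₗ (α : A →ₗ[K] A)) (b i) * ((rhoStar (α : A →ₗ[K] A) α tr).compr₂ YD (b j) (b.coord i) * (ZD ∘ₗ LinearMap.lcomp K K (α.symm : A →ₗ[K] A)) (b.coord j)) - (tr.compr₂ XA) (b i) (b j) * ((ZD ∘ₗ LinearMap.lcomp K K (α.symm : A →ₗ[K] A)) (b.coord i) * (YD ∘ₗ LinearMap.lcomp K K (α.symm : A →ₗ[K] A)) (b.coord j))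 := by
      intro i j
      rw [bb_tmul]
      simp only [map_sub, map_add, pair12_tmul, hP, hQ, LinearEquiv.coe_coe, hγinl, hγinr, hmB, map_zero, LinearMap.zero_apply, zero_add, add_zero, sub_zero, zero_sub, sub_self, TensorProduct.tmul_zero, TensorProduct.zero_tmul, Prod.mk_zero_zero, map_smul, smul_eq_mul, hXa, hXd, hYa, hYd, hZa, hZd, LinearMap.comp_apply, LinearMap.compr₂_apply, LinearMap.flip_apply, LinearMap.lcomp_apply, hlc, LinearMap.add_apply, LinearMap.sub_apply, map_neg, neg_neg]
      ring
    have bridge2 : ∀ i j, ζ (pair12 ξ η (homPreLieBB (sdProduct (tr - tl.flip) (rhoStar (α : A →ₗ[K] A) α tr + rhoStar (α : A →ₗ[K] A) α tl) (rhoStar (α : A →ₗ[K] A) α tl)) (↑γ)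
        ((P i ⊗ₜ[K] Q i) ⊗ₜ[K] (Q j ⊗ₜ[K] P j))))
        = (XA ∘ₗ (α : A →ₗ[K] A)) (b i) * ((rhoStar (α : A →ₗ[K] A) α tl).compr₂ ZD (b j) (b.coord i) * (YD ∘ₗ LinearMap.lcomp K K (α.symm : A →ₗ[K] A)) (b.coord j)) - (rhoStar (α : A →ₗ[K] A) α tr).compr₂ XD (b i) (b.coord j) * ((YA ∘ₗ (α : A →ₗ[K] A)) (b j) * (ZD ∘ₗ LinearMap.lcomp K K (α.symm : A →ₗ[K] A)) (b.coord i)) - (rhoStar (α : A →ₗ[K] A) α tl).compr₂ XD (b i) (b.coord j) * ((YA ∘ₗ (α : A →ₗ[K] A)) (b j) * (ZD ∘ₗ LinearMap.lcomp K K (α.symm : A →ₗ[K] A)) (b.coord i)) := by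
      intro i j
      rw [bb_tmul]
      simp only [map_sub, map_add, pair12_tmul, hP, hQ, LinearEquiv.coe_coe, hγinl, hγinr, hmB, map_zero, LinearMap.zero_apply, zero_add, add_zero, sub_zero, zero_sub, sub_self, TensorProduct.tmul_zero, TensorProduct.zero_tmul, Prod.mk_zero_zero, map_smul, smul_eq_mul, hXa, hXd, hYa, hYd, hZa, hZd, LinearMap.comp_apply, LinearMap.compr₂_apply, LinearMap.flip_apply, LinearMap.lcomp_apply, hlc, LinearMap.add_apply, LinearMap.sub_apply, map_neg, neg_neg]
      ring
    have bridge3 : ∀ i j, ζ (pair12 ξ η (homPreLieBB (sdProduct (tr - tl.flip) (rhoStar (α : A →ₗ[K] A) α tr + rhoStar (α : A →ₗ[K] A) α tl) (rhoStar (α : A →ₗ[K] A) α tl)) (↑γ)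
        ((Q i ⊗ₜ[K] P i) ⊗ₜ[K] (P j ⊗ₜ[K] Q j))))
        = (rhoStar (α : A →ₗ[K] A) α tr).compr₂ ZD (b i) (b.coord j) * ((YA ∘ₗ (α : A →ₗ[K] A)) (b j) * (XD ∘ₗ LinearMap.lcomp K K (α.symm : A →ₗ[K] A)) (b.coord i)) + (rhoStar (α : A →ₗ[K] A) α tl).compr₂ ZD (b i) (b.coord j) * ((YA ∘ₗ (α : A →ₗ[K] A)) (b j) * (XD ∘ₗ LinearMap.lcomp K K (α.symm : A →ₗ[K] A)) (b.coord i)) + (tl.compr₂ YA) (b i) (b j) * ((XD ∘ₗ LinearMap.lcomp K K (α.symm : A →ₗ[K] A)) (b.coord i) * (ZD ∘ₗ LinearMap.lcomp K K (α.symm : A →ₗ[K] A)) (b.coord j)) + (tr.compr₂ YA) (b i) (b j) * ((XD ∘ₗ LinearMap.lcomp K K (α.symm : A →ₗ[K] A)) (b.coord i) * (ZD ∘ₗ LinearMap.lcomp K K (α.symm : A →ₗ[K] A)) (b.coord j)) - ((tr.flip).compr₂ YA) (b i) (b j) * ((XD ∘ₗ LinearMap.lcomp K K (α.symm : A →ₗ[K]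 A)) (b.coord i) * (ZD ∘ₗ LinearMap.lcomp K K (α.symm : A →ₗ[K] A)) (b.coord j)) - ((tl.flip).compr₂ YA) (b i) (b j) * ((XD ∘ₗ LinearMap.lcomp K K (α.symm : A →ₗ[K] A)) (b.coord i) * (ZD ∘ₗ LinearMap.lcomp K K (α.symm : A →ₗ[K] A)) (b.coord j)) - (ZA ∘ₗ (α : A →ₗ[K] A)) (b i) * ((rhoStar (α : A →ₗ[K] A) α tl).compr₂ XD (b j) (b.coord i) * (YD ∘ₗ LinearMap.lcomp K K (α.symm : A →ₗ[K] A)) (b.coord j)) := by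
      intro i j
      rw [bb_tmul]
      simp only [map_sub, map_add, pair12_tmul, hP, hQ, LinearEquiv.coe_coe, hγinl, hγinr, hmB, map_zero, LinearMap.zero_apply, zero_add, add_zero, sub_zero, zero_sub, sub_self, TensorProduct.tmul_zero, TensorProduct.zero_tmul, Prod.mk_zero_zero, map_smul, smul_eq_mul, hXa, hXd, hYa, hYd, hZa, hZd, LinearMap.comp_apply, LinearMap.compr₂_apply, LinearMap.flip_apply, LinearMap.lcomp_apply, hlc, LinearMap.add_apply, LinearMap.sub_apply, map_neg, neg_neg]
      ring
    have bridge4 : ∀ i j, ζ (pair12 ξ η (homPreLieBB (sdProduct (tr - tl.flip) (rhoStar (α : A →ₗ[K] A) α tr + rhoStar (α : A →ₗ[K] A) α tl) (rhoStar (α : A →ₗ[K] A) α tl)) (↑γ)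
        ((Q i ⊗ₜ[K] P i) ⊗ₜ[K] (Q j ⊗ₜ[K] P j))))
        = (tr.compr₂ ZA) (b i) (b j) * ((XD ∘ₗ LinearMap.lcomp K K (α.symm : A →ₗ[K] A)) (b.coord i) * (YD ∘ₗ LinearMap.lcomp K K (α.symm : A →ₗ[K] A)) (b.coord j)) + (rhoStar (α : A →ₗ[K] A) α tr).compr₂ YD (b i) (b.coord j) * ((ZA ∘ₗ (α : A →ₗ[K] A)) (b j) * (XD ∘ₗ LinearMap.lcomp K K (α.symm : A →ₗ[K] A)) (b.coord i)) - ((tl.flip).compr₂ ZA) (b i) (b j) * ((XD ∘ₗ LinearMap.lcomp K K (α.symm : A →ₗ[K] A)) (b.coord i) * (YD ∘ₗ LinearMap.lcomp K K (α.symm : A →ₗ[K] A)) (b.coord j)) := by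
      intro i j
      rw [bb_tmul]
      simp only [map_sub, map_add, pair12_tmul, hP, hQ, LinearEquiv.coe_coe, hγinl, hγinr, hmB, map_zero, LinearMap.zero_apply, zero_add, add_zero, sub_zero, zero_sub, sub_self, TensorProduct.tmul_zero, TensorProduct.zero_tmul, Prod.mk_zero_zero, map_smul, smul_eq_mul, hXa, hXd, hYa, hYd, hZa, hZd, LinearMap.comp_apply, LinearMap.compr₂_apply, LinearMap.flip_apply, LinearMap.lcomp_apply, hlc, LinearMap.add_apply, LinearMap.sub_apply, map_neg, neg_neg]
      ring
    simp only [bridge1, bridge2, bridge3, bridge4]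
    simp only [Finset.sum_add_distrib, Finset.sum_sub_distrib]
    rw [patA b (XA ∘ₗ (α : A →ₗ[K] A)) ((rhoStar (α : A →ₗ[K] A) α tr).compr₂ YD) (ZD ∘ₗ LinearMap.lcomp K K (α.symm : A →ₗ[K] A)), patB b (tr.compr₂ XA) (ZD ∘ₗ LinearMap.lcomp K K (α.symm : A →ₗ[K] A)) (YD ∘ₗ LinearMap.lcomp K K (α.symm : A →ₗ[K] A)), patB b ((tl.flip).compr₂ XA) (ZD ∘ₗ LinearMap.lcomp K K (α.symm : A →ₗ[K] A)) (YD ∘ₗ LinearMap.lcomp K K (α.symm : A →ₗ[K] A)), patA b (XA ∘ₗ (α : A →ₗ[K] A)) ((rhoStar (α : A →ₗ[K] A) α tl).compr₂ ZD) (YD ∘ₗ LinearMap.lcomp K K (α.symm : A →ₗ[K] A)), patC b ((rhoStar (α : A →ₗ[K] A) α tr).compr₂ XD) (YA ∘ₗ (α : A →ₗ[K] A)) (ZD ∘ₗ LinearMap.lcomp K K (α.symm : A →ₗ[K] A)), patC b ((rhoStar (α : A →ₗ[K] A) α tl).compr₂ XD) (YA ∘ₗ (α : A →ₗ[K] A))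 (ZD ∘ₗ LinearMap.lcomp K K (α.symm : A →ₗ[K] A)), patC b ((rhoStar (α : A →ₗ[K] A) α tr).compr₂ ZD) (YA ∘ₗ (α : A →ₗ[K] A)) (XD ∘ₗ LinearMap.lcomp K K (α.symm : A →ₗ[K] A)), patC b ((rhoStar (α : A →ₗ[K] A) α tl).compr₂ ZD) (YA ∘ₗ (α : A →ₗ[K] A)) (XD ∘ₗ LinearMap.lcomp K K (α.symm : A →ₗ[K] A)), patB b ((tr.flip).compr₂ YA) (XD ∘ₗ LinearMap.lcomp K K (α.symm : A →ₗ[K] A)) (ZD ∘ₗ LinearMap.lcomp K K (α.symm : A →ₗ[K] A)), patB b (tl.compr₂ YA) (XD ∘ₗ LinearMap.lcomp K K (α.symm : A →ₗ[K] A)) (ZD ∘ₗ LinearMap.lcomp K K (α.symm : A →ₗ[K] A)), patB b (tr.compr₂ YA) (XD ∘ₗ LinearMap.lcomp K K (α.symm : A →ₗ[K] A)) (ZD ∘ₗ LinearMap.lcomp K K (α.symm : A →ₗ[K] A)), patB b ((tl.flip).compr₂ YA) (XD ∘ₗ LinearMap.lcomp K K (α.symm : A →ₗ[K] A)) (ZD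 ∘ₗ LinearMap.lcomp K K (α.symm : A →ₗ[K] A)), patA b (ZA ∘ₗ (α : A →ₗ[K] A)) ((rhoStar (α : A →ₗ[K] A) α tl).compr₂ XD) (YD ∘ₗ LinearMap.lcomp K K (α.symm : A →ₗ[K] A)), patB b (tr.compr₂ ZA) (XD ∘ₗ LinearMap.lcomp K K (α.symm : A →ₗ[K] A)) (YD ∘ₗ LinearMap.lcomp K K (α.symm : A →ₗ[K] A)), patB b ((tl.flip).compr₂ ZA) (XD ∘ₗ LinearMap.lcomp K K (α.symm : A →ₗ[K] A)) (YD ∘ₗ LinearMap.lcomp K K (α.symm : A →ₗ[K] A)), patC b ((rhoStar (α : A →ₗ[K] A) α tr).compr₂ YD) (ZA ∘ₗ (α : A →ₗ[K] A)) (XD ∘ₗ LinearMap.lcomp K K (α.symm : A →ₗ[K] A))]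
    have hG1 : (YD ∘ₗ LinearMap.lcomp K K (α.symm : A →ₗ[K] A)) (((rhoStar (α : A →ₗ[K] A) α tl).compr₂ ZD).flip (XA ∘ₗ (α : A →ₗ[K] A))) + (YD ∘ₗ LinearMap.lcomp K K (α.symm : A →ₗ[K] A)) ((ZD ∘ₗ LinearMap.lcomp K K (α.symm : A →ₗ[K] A)) ∘ₗ ((tl.flip).compr₂ XA).flip) - (YD ∘ₗ LinearMap.lcomp K K (α.symm : A →ₗ[K] A)) ((ZD ∘ₗ LinearMap.lcomp K K (α.symm : A →ₗ[K] A)) ∘ₗ (tr.compr₂ XA).flip) - (ZD ∘ₗ LinearMap.lcomp K K (α.symm : A →ₗ[K] A)) (((rhoStar (α : A →ₗ[K] A) α tr).compr₂ YD).flip (XA ∘ₗ (α : A →ₗ[K] A))) = 0 := by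
      have hc1 : LinearMap.lcomp K K (α.symm : A →ₗ[K] A) (((rhoStar (α : A →ₗ[K] A) α tl).compr₂ ZD).flip (XA ∘ₗ (α : A →ₗ[K] A))
            + (ZD ∘ₗ LinearMap.lcomp K K (α.symm : A →ₗ[K] A)) ∘ₗ ((tl.flip).compr₂ XA).flip
            - (ZD ∘ₗ LinearMap.lcomp K K (α.symm : A →ₗ[K] A)) ∘ₗ (tr.compr₂ XA).flip)
          = ZD ∘ₗ (-((tr.compl₁₂ (α.symm : A →ₗ[K] A) (α.symm : A →ₗ[K] A)).compr₂ XA)).flip := by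
        apply LinearMap.ext; intro w
        simp only [LinearMap.lcomp_apply, LinearMap.add_apply, LinearMap.sub_apply, LinearMap.neg_apply, LinearMap.comp_apply, LinearMap.flip_apply, LinearMap.compr₂_apply, LinearMap.compl₁₂_apply, LinearEquiv.coe_coe, hrho, LinearEquiv.apply_symm_apply, LinearEquiv.symm_apply_apply, htr', htl', htra, htla, map_neg, neg_neg]
        rw [← map_add ZD, ← map_sub ZD]
        congr 1
        apply LinearMap.ext; intro z
        simp only [LinearMap.lcomp_apply, LinearMap.add_apply, LinearMap.sub_apply, LinearMap.neg_apply, LinearMap.comp_apply, LinearMap.flip_apply, LinearMap.compr₂_apply, LinearMap.compl₁₂_apply, LinearEquiv.coe_coe, hrho, LinearEquiv.apply_symm_apply, LinearEquiv.symm_apply_apply, htr', htl', htra, htla, map_neg, neg_neg]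
        try ring
      have hd1 : LinearMap.lcomp K K (α.symm : A →ₗ[K] A) (((rhoStar (α : A →ₗ[K] A) α tr).compr₂ YD).flip (XA ∘ₗ (α : A →ₗ[K] A))) = YD ∘ₗ (-((tr.compl₁₂ (α.symm : A →ₗ[K] A) (α.symm : A →ₗ[K] A)).compr₂ XA)) := by
        apply LinearMap.ext; intro w
        simp only [LinearMap.lcomp_apply, LinearMap.add_apply, LinearMap.sub_apply, LinearMap.neg_apply, LinearMap.comp_apply, LinearMap.flip_apply, LinearMap.compr₂_apply, LinearMap.compl₁₂_apply, LinearEquiv.coe_coe, hrho, LinearEquiv.apply_symm_apply, LinearEquiv.symm_apply_apply, htr', htl', htra, htla, map_neg, neg_neg]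
        rw [← map_neg YD]
        congr 1
        apply LinearMap.ext; intro z
        simp only [LinearMap.lcomp_apply, LinearMap.add_apply, LinearMap.sub_apply, LinearMap.neg_apply, LinearMap.comp_apply, LinearMap.flip_apply, LinearMap.compr₂_apply, LinearMap.compl₁₂_apply, LinearEquiv.coe_coe, hrho, LinearEquiv.apply_symm_apply, LinearEquiv.symm_apply_apply, htr', htl', htra, htla, map_neg, neg_neg]
        try ring
      have step : (YD ∘ₗ LinearMap.lcomp K K (α.symm : A →ₗ[K] A)) (((rhoStar (α : A →ₗ[K] A) α tl).compr₂ ZD).flip (XA ∘ₗ (α : A →ₗ[K] A))) + (YD ∘ₗ LinearMap.lcomp K K (α.symm : A →ₗ[K] A)) ((ZD ∘ₗ LinearMap.lcomp K K (α.symm : A →ₗ[K] A)) ∘ₗ ((tl.flip).compr₂ XA).flip) - (YD ∘ₗ LinearMap.lcomp K K (α.symm : A →ₗ[K] A)) ((ZD ∘ₗ LinearMap.lcomp K K (α.symm : A →ₗ[K] A)) ∘ₗ (tr.compr₂ XA).flip) - (ZD ∘ₗ LinearMap.lcomp K K (α.symm : A →ₗ[K] A)) (((rhoStar (α : A →ₗ[K]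 A) α tr).compr₂ YD).flip (XA ∘ₗ (α : A →ₗ[K] A)))
          = YD (LinearMap.lcomp K K (α.symm : A →ₗ[K] A) (((rhoStar (α : A →ₗ[K] A) α tl).compr₂ ZD).flip (XA ∘ₗ (α : A →ₗ[K] A))
              + (ZD ∘ₗ LinearMap.lcomp K K (α.symm : A →ₗ[K] A)) ∘ₗ ((tl.flip).compr₂ XA).flip
              - (ZD ∘ₗ LinearMap.lcomp K K (α.symm : A →ₗ[K] A)) ∘ₗ (tr.compr₂ XA).flip))
            - ZD (LinearMap.lcomp K K (α.symm : A →ₗ[K] A) (((rhoStar (α : A →ₗ[K] A) α tr).compr₂ YD).flip (XA ∘ₗ (α : A →ₗ[K] A)))) := by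
        simp only [LinearMap.comp_apply, map_add, map_sub]
      rw [step, hc1, hd1, fubini (-((tr.compl₁₂ (α.symm : A →ₗ[K] A) (α.symm : A →ₗ[K] A)).compr₂ XA)) YD ZD]
      ring
    have hG2 : (XD ∘ₗ LinearMap.lcomp K K (α.symm : A →ₗ[K] A)) (((rhoStar (α : A →ₗ[K] A) α tr).compr₂ ZD).flip (YA ∘ₗ (α : A →ₗ[K] A))) + (XD ∘ₗ LinearMap.lcomp K K (α.symm : A →ₗ[K] A)) (((rhoStar (α : A →ₗ[K] A) α tl).compr₂ ZD).flip (YA ∘ₗ (α : A →ₗ[K] A))) + (ZD ∘ₗ LinearMap.lcomp K K (α.symm : A →ₗ[K] A)) ((XD ∘ₗ LinearMap.lcomp K K (α.symm : A →ₗ[K] A)) ∘ₗ (tl.compr₂ YA).flip) + (ZD ∘ₗ LinearMap.lcomp K K (α.symm : A →ₗ[K] A)) ((XD ∘ₗ LinearMap.lcomp K K (α.symm : A →ₗ[K] A)) ∘ₗ (tr.compr₂ YA).flip) - (ZD ∘ₗ LinearMap.lcomp K K (α.symm : A →ₗ[K] A)) (((rhoStar (α : A →ₗ[K] A) α tr).compr₂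 XD).flip (YA ∘ₗ (α : A →ₗ[K] A))) - (ZD ∘ₗ LinearMap.lcomp K K (α.symm : A →ₗ[K] A)) (((rhoStar (α : A →ₗ[K] A) α tl).compr₂ XD).flip (YA ∘ₗ (α : A →ₗ[K] A))) - (ZD ∘ₗ LinearMap.lcomp K K (α.symm : A →ₗ[K] A)) ((XD ∘ₗ LinearMap.lcomp K K (α.symm : A →ₗ[K] A)) ∘ₗ ((tr.flip).compr₂ YA).flip) - (ZD ∘ₗ LinearMap.lcomp K K (α.symm : A →ₗ[K] A)) ((XD ∘ₗ LinearMap.lcomp K K (α.symm : A →ₗ[K] A)) ∘ₗ ((tl.flip).compr₂ YA).flip) = 0 := by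
      have hc2 : LinearMap.lcomp K K (α.symm : A →ₗ[K] A) (((rhoStar (α : A →ₗ[K] A) α tr).compr₂ ZD).flip (YA ∘ₗ (α : A →ₗ[K] A)) + ((rhoStar (α : A →ₗ[K] A) α tl).compr₂ ZD).flip (YA ∘ₗ (α : A →ₗ[K] A)))
          = ZD ∘ₗ (-(((tr + tl).compl₁₂ (α.symm : A →ₗ[K] A) (α.symm : A →ₗ[K] A)).compr₂ YA)) := by
        apply LinearMap.ext; intro w
        simp only [LinearMap.lcomp_apply, LinearMap.add_apply, LinearMap.sub_apply, LinearMap.neg_apply, LinearMap.comp_apply, LinearMap.flip_apply, LinearMap.compr₂_apply, LinearMap.compl₁₂_apply, LinearEquiv.coe_coe, hrho, LinearEquiv.apply_symm_apply, LinearEquiv.symm_apply_apply, htr', htl', htra, htla, map_neg, neg_neg]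
        rw [← map_add ZD]
        rw [← map_neg ZD]
        congr 1
        apply LinearMap.ext; intro z
        simp only [LinearMap.lcomp_apply, LinearMap.add_apply, LinearMap.sub_apply, LinearMap.neg_apply, LinearMap.comp_apply, LinearMap.flip_apply, LinearMap.compr₂_apply, LinearMap.compl₁₂_apply, LinearEquiv.coe_coe, hrho, LinearEquiv.apply_symm_apply, LinearEquiv.symm_apply_apply, htr', htl', htra, htla, map_neg, neg_neg]
        simp only [LinearMap.add_apply, map_add]
        try ring
      have hc2' : LinearMap.lcomp K K (α.symm : A →ₗ[K] A) (((rhoStar (α : A →ₗ[K] A) α tr).compr₂ XD).flip (YA ∘ₗ (α : A →ₗ[K] A)) + ((rhoStar (α : A →ₗ[K] A) α tl).compr₂ XD).flip (YA ∘ₗ (α : A →ₗ[K] A))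
            + (XD ∘ₗ LinearMap.lcomp K K (α.symm : A →ₗ[K] A)) ∘ₗ ((tr.flip).compr₂ YA).flip
            - (XD ∘ₗ LinearMap.lcomp K K (α.symm : A →ₗ[K] A)) ∘ₗ (tl.compr₂ YA).flip
            - (XD ∘ₗ LinearMap.lcomp K K (α.symm : A →ₗ[K] A)) ∘ₗ (tr.compr₂ YA).flip
            + (XD ∘ₗ LinearMap.lcomp K K (α.symm : A →ₗ[K] A)) ∘ₗ ((tl.flip).compr₂ YA).flip)
          = XD ∘ₗ (-(((tr + tl).compl₁₂ (α.symm : A →ₗ[K] A) (α.symm : A →ₗ[K] A)).compr₂ YA)).flip := by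
        apply LinearMap.ext; intro w
        simp only [LinearMap.lcomp_apply, LinearMap.add_apply, LinearMap.sub_apply, LinearMap.neg_apply, LinearMap.comp_apply, LinearMap.flip_apply, LinearMap.compr₂_apply, LinearMap.compl₁₂_apply, LinearEquiv.coe_coe, hrho, LinearEquiv.apply_symm_apply, LinearEquiv.symm_apply_apply, htr', htl', htra, htla, map_neg, neg_neg]
        rw [← map_add XD, ← map_add XD, ← map_sub XD, ← map_sub XD, ← map_add XD]
        congr 1
        apply LinearMap.ext; intro z
        simp only [LinearMap.lcomp_apply, LinearMap.add_apply, LinearMap.sub_apply, LinearMap.neg_apply, LinearMap.comp_apply, LinearMap.flip_apply, LinearMap.compr₂_apply, LinearMap.compl₁₂_apply, LinearEquiv.coe_coe, hrho, LinearEquiv.apply_symm_apply, LinearEquiv.symm_apply_apply, htr', htl', htra, htla, map_neg, neg_neg]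
        simp only [LinearMap.add_apply, map_add]
        try ring
      have step : (XD ∘ₗ LinearMap.lcomp K K (α.symm : A →ₗ[K] A)) (((rhoStar (α : A →ₗ[K] A) α tr).compr₂ ZD).flip (YA ∘ₗ (α : A →ₗ[K] A))) + (XD ∘ₗ LinearMap.lcomp K K (α.symm : A →ₗ[K] A)) (((rhoStar (α : A →ₗ[K] A) α tl).compr₂ ZD).flip (YA ∘ₗ (α : A →ₗ[K] A))) + (ZD ∘ₗ LinearMap.lcomp K K (α.symm : A →ₗ[K] A)) ((XD ∘ₗ LinearMap.lcomp K K (α.symm : A →ₗ[K] A)) ∘ₗ (tl.compr₂ YA).flip) + (ZD ∘ₗ LinearMap.lcomp K K (α.symm : A →ₗ[K] A)) ((XD ∘ₗ LinearMap.lcomp K K (α.symm : A →ₗ[K] A)) ∘ₗ (tr.compr₂ YA).flip) - (ZD ∘ₗ LinearMap.lcomp K K (α.symm : A →ₗ[K] A)) (((rhoStar (α : A →ₗ[K] A) α tr).compr₂ XD).flip (YA ∘ₗ (α : A →ₗ[K] A))) - (ZD ∘ₗ LinearMap.lcomp K K (α.symm : A →ₗ[K] A)) (((rhoStar (α : A →ₗ[K]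 A) α tl).compr₂ XD).flip (YA ∘ₗ (α : A →ₗ[K] A))) - (ZD ∘ₗ LinearMap.lcomp K K (α.symm : A →ₗ[K] A)) ((XD ∘ₗ LinearMap.lcomp K K (α.symm : A →ₗ[K] A)) ∘ₗ ((tr.flip).compr₂ YA).flip) - (ZD ∘ₗ LinearMap.lcomp K K (α.symm : A →ₗ[K] A)) ((XD ∘ₗ LinearMap.lcomp K K (α.symm : A →ₗ[K] A)) ∘ₗ ((tl.flip).compr₂ YA).flip)
          = XD (LinearMap.lcomp K K (α.symm : A →ₗ[K] A) (((rhoStar (α : A →ₗ[K] A) α tr).compr₂ ZD).flip (YA ∘ₗ (α : A →ₗ[K] A)) + ((rhoStar (α : A →ₗ[K] A) α tl).compr₂ ZD).flip (YA ∘ₗ (α : A →ₗ[K] A))))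
            - ZD (LinearMap.lcomp K K (α.symm : A →ₗ[K] A) (((rhoStar (α : A →ₗ[K] A) α tr).compr₂ XD).flip (YA ∘ₗ (α : A →ₗ[K] A)) + ((rhoStar (α : A →ₗ[K] A) α tl).compr₂ XD).flip (YA ∘ₗ (α : A →ₗ[K] A))
              + (XD ∘ₗ LinearMap.lcomp K K (α.symm : A →ₗ[K] A)) ∘ₗ ((tr.flip).compr₂ YA).flip
              - (XD ∘ₗ LinearMap.lcomp K K (α.symm : A →ₗ[K] A)) ∘ₗ (tl.compr₂ YA).flip
              - (XD ∘ₗ LinearMap.lcomp K K (α.symm : A →ₗ[K] A)) ∘ₗ (tr.compr₂ YA).flip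
              + (XD ∘ₗ LinearMap.lcomp K K (α.symm : A →ₗ[K] A)) ∘ₗ ((tl.flip).compr₂ YA).flip)) := by
        simp only [LinearMap.comp_apply, map_add, map_sub]
        ring
      rw [step, hc2, hc2', fubini (-(((tr + tl).compl₁₂ (α.symm : A →ₗ[K] A) (α.symm : A →ₗ[K] A)).compr₂ YA)) ZD XD]
      ring
    have hG3 : (XD ∘ₗ LinearMap.lcomp K K (α.symm : A →ₗ[K] A)) (((rhoStar (α : A →ₗ[K] A) α tr).compr₂ YD).flip (ZA ∘ₗ (α : A →ₗ[K] A))) + (YD ∘ₗ LinearMap.lcomp K K (α.symm : A →ₗ[K] A)) ((XD ∘ₗ LinearMap.lcomp K K (α.symm : A →ₗ[K] A)) ∘ₗ (tr.compr₂ ZA).flip) - (YD ∘ₗ LinearMap.lcomp K K (α.symm : A →ₗ[K] A)) ((XD ∘ₗ LinearMap.lcomp K K (α.symm : A →ₗ[K] A)) ∘ₗ ((tl.flip).compr₂ ZA).flip) - (YD ∘ₗ LinearMap.lcomp K K (α.symm : A →ₗ[K] A)) (((rhoStar (α : A →ₗ[K] A) α tl).compr₂ XD).flip (ZA ∘ₗ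 (α : A →ₗ[K] A))) = 0 := by
      have hc3 : LinearMap.lcomp K K (α.symm : A →ₗ[K] A) ((XD ∘ₗ LinearMap.lcomp K K (α.symm : A →ₗ[K] A)) ∘ₗ (tr.compr₂ ZA).flip
            - (XD ∘ₗ LinearMap.lcomp K K (α.symm : A →ₗ[K] A)) ∘ₗ ((tl.flip).compr₂ ZA).flip
            - ((rhoStar (α : A →ₗ[K] A) α tl).compr₂ XD).flip (ZA ∘ₗ (α : A →ₗ[K] A)))
          = -(XD ∘ₗ (-((tr.compl₁₂ (α.symm : A →ₗ[K] A) (α.symm : A →ₗ[K] A)).compr₂ ZA)).flip) := by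
        apply LinearMap.ext; intro w
        simp only [LinearMap.lcomp_apply, LinearMap.add_apply, LinearMap.sub_apply, LinearMap.neg_apply, LinearMap.comp_apply, LinearMap.flip_apply, LinearMap.compr₂_apply, LinearMap.compl₁₂_apply, LinearEquiv.coe_coe, hrho, LinearEquiv.apply_symm_apply, LinearEquiv.symm_apply_apply, htr', htl', htra, htla, map_neg, neg_neg]
        rw [← map_sub XD, ← map_sub XD]
        rw [← map_neg XD]
        congr 1
        apply LinearMap.ext; intro z
        simp only [LinearMap.lcomp_apply, LinearMap.add_apply, LinearMap.sub_apply, LinearMap.neg_apply, LinearMap.comp_apply, LinearMap.flip_apply, LinearMap.compr₂_apply, LinearMap.compl₁₂_apply, LinearEquiv.coe_coe, hrho, LinearEquiv.apply_symm_apply, LinearEquiv.symm_apply_apply, htr', htl', htra, htla, map_neg, neg_neg]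
        try ring
      have hd3 : LinearMap.lcomp K K (α.symm : A →ₗ[K] A) (((rhoStar (α : A →ₗ[K] A) α tr).compr₂ YD).flip (ZA ∘ₗ (α : A →ₗ[K] A))) = YD ∘ₗ (-((tr.compl₁₂ (α.symm : A →ₗ[K] A) (α.symm : A →ₗ[K] A)).compr₂ ZA)) := by
        apply LinearMap.ext; intro w
        simp only [LinearMap.lcomp_apply, LinearMap.add_apply, LinearMap.sub_apply, LinearMap.neg_apply, LinearMap.comp_apply, LinearMap.flip_apply, LinearMap.compr₂_apply, LinearMap.compl₁₂_apply, LinearEquiv.coe_coe, hrho, LinearEquiv.apply_symm_apply, LinearEquiv.symm_apply_apply, htr', htl', htra, htla, map_neg, neg_neg]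
        rw [← map_neg YD]
        congr 1
        apply LinearMap.ext; intro z
        simp only [LinearMap.lcomp_apply, LinearMap.add_apply, LinearMap.sub_apply, LinearMap.neg_apply, LinearMap.comp_apply, LinearMap.flip_apply, LinearMap.compr₂_apply, LinearMap.compl₁₂_apply, LinearEquiv.coe_coe, hrho, LinearEquiv.apply_symm_apply, LinearEquiv.symm_apply_apply, htr', htl', htra, htla, map_neg, neg_neg]
        try ring
      have step : (XD ∘ₗ LinearMap.lcomp K K (α.symm : A →ₗ[K] A)) (((rhoStar (α : A →ₗ[K] A) α tr).compr₂ YD).flip (ZA ∘ₗ (α : A →ₗ[K] A))) + (YD ∘ₗ LinearMap.lcomp K K (α.symm : A →ₗ[K] A)) ((XD ∘ₗ LinearMap.lcomp K K (α.symm : A →ₗ[K] A)) ∘ₗ (tr.compr₂ ZA).flip) - (YD ∘ₗ LinearMap.lcomp K K (α.symm : A →ₗ[K] A)) ((XD ∘ₗ LinearMap.lcomp K K (α.symm : A →ₗ[K] A)) ∘ₗ ((tl.flip).compr₂ ZA).flip) - (YD ∘ₗ LinearMap.lcomp K K (α.symm : A →ₗ[K] A)) (((rhoStar (α : A →ₗ[K]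 A) α tl).compr₂ XD).flip (ZA ∘ₗ (α : A →ₗ[K] A)))
          = XD (LinearMap.lcomp K K (α.symm : A →ₗ[K] A) (((rhoStar (α : A →ₗ[K] A) α tr).compr₂ YD).flip (ZA ∘ₗ (α : A →ₗ[K] A))))
            + YD (LinearMap.lcomp K K (α.symm : A →ₗ[K] A) ((XD ∘ₗ LinearMap.lcomp K K (α.symm : A →ₗ[K] A)) ∘ₗ (tr.compr₂ ZA).flip
              - (XD ∘ₗ LinearMap.lcomp K K (α.symm : A →ₗ[K] A)) ∘ₗ ((tl.flip).compr₂ ZA).flip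
              - ((rhoStar (α : A →ₗ[K] A) α tl).compr₂ XD).flip (ZA ∘ₗ (α : A →ₗ[K] A)))) := by
        simp only [LinearMap.comp_apply, map_add, map_sub]
        ring
      rw [step, hc3, hd3]
      simp only [map_neg]
      rw [fubini (-((tr.compl₁₂ (α.symm : A →ₗ[K] A) (α.symm : A →ₗ[K] A)).compr₂ ZA)) YD XD]
      ring
    linear_combination hG1 + hG2 + hG3
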